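/- Let Y: X → (0,∞) be measurable with ∫_X Y dν < ∞, and define V(x,y) = sup_{c>0} ( U(x,c) − c·y ) for y > 0 (the pointwise convex conjugate; V(x,Y(x)) is measurable in x and ∫_X V(x,Y(x)) dν > −∞). Then sup_c ( ∫_X U(x,c(x)) dν(x) − ∫_X c(x) Y(x) dν(x) ) = ∫_X V(x, Y(x)) dν(x), as an equality in (−∞, +∞], where the supremum is taken over all measurable functions c: X → (0,∞) satisfying ∫_X (U(x,c(x)))⁻ dν(x) < ∞ and ∫_X c(x) Y(x) dν(x) < ∞. -/

import Mathlib

/-! For every admissible `c`, the integrand `U(x, c x) - c x * Y x` lies below `V(x, Y x)`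
pointwise, which gives `≤`. For `≥`, take a sequence `q` dense in `(0, ∞)` and let `cₙ(x)` be a
maximiser of `U(x, ·) - · * Y x` over `q 0, …, q n`, selected by a greedy recursion so that it is
measurable. Since `U(x, ·)` is continuous, the integrands increase to `V(x, Y x)`, and monotone
convergence in `EReal` (with the integrable `n = 0` term as base point) gives convergence of the
values, also when `∫ V(x, Y x) dν = +∞`. Each `cₙ` takes finitely many values, and `x ↦ U(x, q)` is
bounded for fixed `q` because `0 ≤ ∂_c U ≤ K₂` with `K₂` decreasing, so `cₙ` is admissible. -/

open MeasureTheory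

/-- The functional `c ↦ ∫ U(x, c(x)) dν`, as an extended-real number, with the convention
that the value is `−∞` (`⊥`) whenever the integral of the negative part is infinite
(in `EReal`, `⊤ - ⊤ = ⊥`, so the subtraction below implements this convention). -/
noncomputable def utilityFunctional {X : Type*} [MeasurableSpace X] (ν : Measure X)
    (U : X → ℝ → ℝ) (c : X → ℝ) : EReal :=
  ((∫⁻ x, ENNReal.ofReal (U x (c x)) ∂ν : ENNReal) : EReal) -
    ((∫⁻ x, ENNReal.ofReal (-(U x (c x))) ∂ν : ENNReal) : EReal)

open Filter Topology Set
open scoped ENNReal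

section ERealIntegral

variable {X : Type*} [MeasurableSpace X] {ν : Measure X} {f g w : X → ℝ}

noncomputable def erealIntegral (ν : Measure X) (f : X → ℝ) : EReal :=
  ((∫⁻ x, ENNReal.ofReal (f x) ∂ν : ℝ≥0∞) : EReal) -
    ((∫⁻ x, ENNReal.ofReal (-f x) ∂ν : ℝ≥0∞) : EReal)

theorem utilityFunctional_eq_erealIntegral (ν : Measure X) (U : X → ℝ → ℝ) (c : X → ℝ) :
    utilityFunctional ν U c = erealIntegral ν fun x => U x (c x) :=
  rfl

theorem lintegral_ofReal_ne_top_of_integrable (hf : Integrable f ν) :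
    ∫⁻ x, ENNReal.ofReal (f x) ∂ν ≠ ∞ :=
  ((lintegral_mono fun x => Real.ofReal_le_enorm (f x)).trans_lt hf.2).ne

theorem lintegral_ofReal_neg_ne_top_of_integrable (hf : Integrable f ν) :
    ∫⁻ x, ENNReal.ofReal (-f x) ∂ν ≠ ∞ :=
  lintegral_ofReal_ne_top_of_integrable (f := fun x => -f x) hf.neg

theorem integrable_of_lintegral_ofReal_ne_top (hf : AEStronglyMeasurable f ν)
    (hpos : ∫⁻ x, ENNReal.ofReal (f x) ∂ν ≠ ∞) (hneg : ∫⁻ x, ENNReal.ofReal (-f x) ∂ν ≠ ∞) :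
    Integrable f ν := by
  refine ⟨hf, ?_⟩
  calc ∫⁻ x, ‖f x‖ₑ ∂ν ≤ ∫⁻ x, (ENNReal.ofReal (f x) + ENNReal.ofReal (-f x)) ∂ν := by
        refine lintegral_mono fun x => ?_
        rw [Real.enorm_eq_ofReal_abs, abs_eq_max_neg, ENNReal.ofReal_max]
        exact max_le_add_of_nonneg (by positivity) (by positivity)
    _ = (∫⁻ x, ENNReal.ofReal (f x) ∂ν) + ∫⁻ x, ENNReal.ofReal (-f x) ∂ν :=
        lintegral_add_left' hf.aemeasurable.ennreal_ofReal _
    _ < ∞ := ENNReal.add_lt_top.2 ⟨hpos.lt_top, hneg.lt_top⟩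

theorem erealIntegral_of_integrable (hf : Integrable f ν) :
    erealIntegral ν f = ∫ x, f x ∂ν := by
  rw [erealIntegral, integral_eq_lintegral_pos_part_sub_lintegral_neg_part hf, EReal.coe_sub,
    EReal.coe_ennreal_toReal (lintegral_ofReal_ne_top_of_integrable hf),
    EReal.coe_ennreal_toReal (lintegral_ofReal_neg_ne_top_of_integrable hf)]

theorem erealIntegral_sub_of_integrable (hf : Integrable f ν) (hg : Integrable g ν) :
    erealIntegral ν (fun x => f x - g x) = erealIntegral ν f - ∫ x, g x ∂ν := by
  rw [erealIntegral_of_integrable (f := fun x => f x - g x) (hf.sub hg),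
    erealIntegral_of_integrable hf, ← EReal.coe_sub, integral_sub hf hg]

theorem erealIntegral_eq_top (hpos : ∫⁻ x, ENNReal.ofReal (f x) ∂ν = ∞)
    (hneg : ∫⁻ x, ENNReal.ofReal (-f x) ∂ν ≠ ∞) : erealIntegral ν f = ⊤ := by
  rw [erealIntegral, hpos, EReal.coe_ennreal_top, ← EReal.coe_ennreal_toReal hneg,
    EReal.top_sub_coe]

theorem erealIntegral_sub_integral_le (hf : AEStronglyMeasurable f ν)
    (hf_neg : ∫⁻ x, ENNReal.ofReal (-f x) ∂ν ≠ ∞) (hg : Integrable g ν)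
    (hw : AEStronglyMeasurable w ν) (hw_neg : ∫⁻ x, ENNReal.ofReal (-w x) ∂ν ≠ ∞)
    (hle : ∀ x, f x - g x ≤ w x) :
    erealIntegral ν f - ∫ x, g x ∂ν ≤ erealIntegral ν w := by
  by_cases hw_pos : ∫⁻ x, ENNReal.ofReal (w x) ∂ν = ∞
  · rw [erealIntegral_eq_top hw_pos hw_neg]
    exact le_top
  have hw_int : Integrable w ν := integrable_of_lintegral_ofReal_ne_top hw hw_pos hw_neg
  have hf_pos : ∫⁻ x, ENNReal.ofReal (f x) ∂ν ≠ ∞ :=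
    ne_top_of_le_ne_top
      (lintegral_ofReal_ne_top_of_integrable (f := fun x => w x + g x) (hw_int.add hg))
      (lintegral_mono fun x => ENNReal.ofReal_le_ofReal (by linarith [hle x]))
  have hf_int : Integrable f ν := integrable_of_lintegral_ofReal_ne_top hf hf_pos hf_neg
  rw [← erealIntegral_sub_of_integrable hf_int hg, erealIntegral_of_integrable hw_int,
    erealIntegral_of_integrable (f := fun x => f x - g x) (hf_int.sub hg), EReal.coe_le_coe_iff]
  exact integral_mono (hf_int.sub hg) hw_int hle

theorem erealIntegral_eq_lintegral_sub_add (hf : AEStronglyMeasurable f ν) (hg : Integrable g ν)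
    (hgf : ∀ x, g x ≤ f x) :
    erealIntegral ν f = ((∫⁻ x, ENNReal.ofReal (f x - g x) ∂ν : ℝ≥0∞) : EReal) + ∫ x, g x ∂ν := by
  by_cases hfg : ∫⁻ x, ENNReal.ofReal (f x - g x) ∂ν = ∞
  · rw [hfg, EReal.coe_ennreal_top, EReal.top_add_coe]
    refine erealIntegral_eq_top ?_ ?_
    · by_contra hpos
      refine hfg.not_lt ?_
      calc ∫⁻ x, ENNReal.ofReal (f x - g x) ∂ν
          ≤ ∫⁻ x, (ENNReal.ofReal (f x) + ENNReal.ofReal (-g x)) ∂ν :=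
            lintegral_mono fun x => by rw [sub_eq_add_neg]; exact ENNReal.ofReal_add_le
        _ = (∫⁻ x, ENNReal.ofReal (f x) ∂ν) + ∫⁻ x, ENNReal.ofReal (-g x) ∂ν :=
            lintegral_add_left' hf.aemeasurable.ennreal_ofReal _
        _ < ∞ := ENNReal.add_lt_top.2
            ⟨Ne.lt_top hpos, (lintegral_ofReal_neg_ne_top_of_integrable hg).lt_top⟩
    · exact ne_top_of_le_ne_top (lintegral_ofReal_neg_ne_top_of_integrable hg)
        (lintegral_mono fun x => ENNReal.ofReal_le_ofReal (neg_le_neg (hgf x)))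
  · have hfg_nonneg : 0 ≤ᵐ[ν] fun x => f x - g x := ae_of_all _ fun x => sub_nonneg.2 (hgf x)
    have hfg_int : Integrable (fun x => f x - g x) ν :=
      (lintegral_ofReal_ne_top_iff_integrable (hf.sub hg.1) hfg_nonneg).1 hfg
    have hf_int : Integrable f ν := by
      simpa only [Pi.add_def, sub_add_cancel] using hfg_int.add hg
    rw [erealIntegral_of_integrable hf_int,
      ← ofReal_integral_eq_lintegral_ofReal hfg_int hfg_nonneg, EReal.coe_ennreal_ofReal,
      max_eq_left (integral_nonneg fun x => sub_nonneg.2 (hgf x)), ← EReal.coe_add,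
      integral_sub hf_int hg, sub_add_cancel]

theorem tendsto_erealIntegral_of_monotone {F : ℕ → X → ℝ}
    (hF : ∀ n, AEStronglyMeasurable (F n) ν) (hF₀ : Integrable (F 0) ν)
    (hmono : ∀ x, Monotone fun n => F n x)
    (hlim : ∀ x, Tendsto (fun n => F n x) atTop (𝓝 (f x))) :
    Tendsto (fun n => erealIntegral ν (F n)) atTop (𝓝 (erealIntegral ν f)) := by
  have hf : AEStronglyMeasurable f ν := aestronglyMeasurable_of_tendsto_ae _ hF (ae_of_all _ hlim)
  have hF₀_le : ∀ x, F 0 x ≤ f x := fun x => (hmono x).ge_of_tendsto (hlim x) 0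
  simp_rw [erealIntegral_eq_lintegral_sub_add (hF _) hF₀ fun x => hmono x (Nat.zero_le _),
    erealIntegral_eq_lintegral_sub_add hf hF₀ hF₀_le]
  have hlintegral : Tendsto (fun n => ∫⁻ x, ENNReal.ofReal (F n x - F 0 x) ∂ν) atTop
      (𝓝 (∫⁻ x, ENNReal.ofReal (f x - F 0 x) ∂ν)) :=
    lintegral_tendsto_of_tendsto_of_monotone
      (fun n => ((hF n).sub hF₀.1).aemeasurable.ennreal_ofReal)
      (ae_of_all _ fun x m n hmn => ENNReal.ofReal_le_ofReal (sub_le_sub_right (hmono x hmn) _))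
      (ae_of_all _ fun x => (ENNReal.continuous_ofReal.tendsto _).comp ((hlim x).sub_const _))
  exact (EReal.continuousAt_add (Or.inr (EReal.coe_ne_bot _)) (Or.inr (EReal.coe_ne_top _))
    ).tendsto.comp
      ((continuous_coe_ennreal_ereal.tendsto _ |>.comp hlintegral).prodMk_nhds tendsto_const_nhds)

end ERealIntegral

section GreedyArgmax

variable {X : Type*} (f : X → ℝ → ℝ) (q : ℕ → ℝ)

noncomputable def greedyArgmax : ℕ → X → ℝ
  | 0 => fun _ => q 0
  | n + 1 => fun x =>
    if f x (q (n + 1)) ≤ f x (greedyArgmax n x) then greedyArgmax n x else q (n + 1)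

variable {f q}

theorem greedyArgmax_mem_range (n : ℕ) (x : X) : greedyArgmax f q n x ∈ range q := by
  induction n with
  | zero => exact mem_range_self 0
  | succ n ih =>
    simp only [greedyArgmax]
    split_ifs
    exacts [ih, mem_range_self _]

theorem apply_greedyArgmax_succ (n : ℕ) (x : X) :
    f x (greedyArgmax f q (n + 1) x) = max (f x (greedyArgmax f q n x)) (f x (q (n + 1))) := by
  simp only [greedyArgmax]
  split_ifs with h
  exacts [(max_eq_left h).symm, (max_eq_right (not_le.1 h).le).symm]

theorem monotone_apply_greedyArgmax (x : X) : Monotone fun n => f x (greedyArgmax f q n x) :=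
  monotone_nat_of_le_succ fun n => (apply_greedyArgmax_succ n x).ge.trans' (le_max_left _ _)

theorem le_apply_greedyArgmax (n : ℕ) (x : X) : f x (q n) ≤ f x (greedyArgmax f q n x) := by
  cases n with
  | zero => rfl
  | succ n => exact (apply_greedyArgmax_succ n x).ge.trans' (le_max_right _ _)

theorem tendsto_apply_greedyArgmax {x : X} {s : ℝ} (hs : IsLUB (range fun k => f x (q k)) s) :
    Tendsto (fun n => f x (greedyArgmax f q n x)) atTop (𝓝 s) := by
  refine tendsto_atTop_isLUB (monotone_apply_greedyArgmax x) ⟨?_, fun b hb => hs.2 ?_⟩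
  · rintro _ ⟨n, rfl⟩
    obtain ⟨k, hk⟩ := greedyArgmax_mem_range (f := f) (q := q) n x
    simpa only [← hk] using hs.1 ⟨k, rfl⟩
  · rintro _ ⟨k, rfl⟩
    exact (le_apply_greedyArgmax k x).trans (hb ⟨k, rfl⟩)

variable [MeasurableSpace X]

theorem measurableSet_apply_le_apply_greedyArgmax (hf : Measurable (Function.uncurry f))
    {n : ℕ} (hn : Measurable (greedyArgmax f q n)) :
    MeasurableSet {x | f x (q (n + 1)) ≤ f x (greedyArgmax f q n x)} :=
  measurableSet_le hf.of_uncurry_right (hf.comp (measurable_id.prodMk hn))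

theorem measurable_greedyArgmax (hf : Measurable (Function.uncurry f)) (n : ℕ) :
    Measurable (greedyArgmax f q n) := by
  induction n with
  | zero => exact measurable_const
  | succ n ih =>
    exact Measurable.ite (measurableSet_apply_le_apply_greedyArgmax hf ih) ih measurable_const

theorem integrable_comp_greedyArgmax {ν : Measure X} (hf : Measurable (Function.uncurry f))
    {φ : X → ℝ → ℝ} (hφ : ∀ k, Integrable (fun x => φ x (q k)) ν) (n : ℕ) :
    Integrable (fun x => φ x (greedyArgmax f q n x)) ν := by
  induction n with
  | zero => exact hφ 0
  | succ n ih =>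
    classical
    refine (Integrable.piecewise
      (measurableSet_apply_le_apply_greedyArgmax hf (measurable_greedyArgmax (q := q) hf n))
      ih.integrableOn (hφ (n + 1)).integrableOn).congr (ae_of_all _ fun x => ?_)
    simp only [greedyArgmax, Set.piecewise, Set.mem_ofPred_eq]
    split_ifs <;> rfl

theorem tendsto_erealIntegral_greedyArgmax {ν : Measure X} {g : X → ℝ}
    (hf : Measurable (Function.uncurry f)) (hf_int : ∀ k, Integrable (fun x => f x (q k)) ν)
    (hg : ∀ x, IsLUB (range fun k => f x (q k)) (g x)) :
    Tendsto (fun n => erealIntegral ν fun x => f x (greedyArgmax f q n x)) atTop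
      (𝓝 (erealIntegral ν g)) :=
  tendsto_erealIntegral_of_monotone
    (fun n => (hf.comp (measurable_id.prodMk (measurable_greedyArgmax hf n))).aestronglyMeasurable)
    (hf_int 0) monotone_apply_greedyArgmax fun x => tendsto_apply_greedyArgmax (hg x)

end GreedyArgmax

theorem DenseRange.isLUB_range_comp_iff {ι α β : Type*} [TopologicalSpace α] [TopologicalSpace β]
    [Preorder β] [ClosedIicTopology β] {d : ι → α} (hd : DenseRange d) {φ : α → β}
    (hφ : Continuous φ) {a : β} : IsLUB (range (φ ∘ d)) a ↔ IsLUB (range φ) a :=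
  isLUB_iff_of_subset_of_subset_closure (range_comp_subset_range d φ)
    (by rw [range_comp]; exact hφ.range_subset_closure_image_dense hd)

theorem isLUB_range_denseSeq_Ioi {h : ℝ → ℝ} (hh : ContinuousOn h (Ioi 0)) {a : ℝ}
    (ha : IsLUB {r | ∃ c, 0 < c ∧ r = h c} a) :
    IsLUB (range fun n => h (TopologicalSpace.denseSeq (Ioi (0 : ℝ)) n)) a := by
  have hrange : {r | ∃ c, 0 < c ∧ r = h c} = range ((Ioi 0).domRestrict h) := by
    ext r
    simp [eq_comm]
  rw [hrange] at ha
  exact ((TopologicalSpace.denseRange_denseSeq _).isLUB_range_comp_iff hh.domRestrict).2 ha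

theorem abs_sub_le_of_hasDerivAt_le {u u' K : ℝ → ℝ}
    (hu : ∀ c ∈ Ioi (0 : ℝ), HasDerivAt u (u' c) c) (hu'_nonneg : ∀ c ∈ Ioi (0 : ℝ), 0 ≤ u' c)
    (hu'_le : ∀ c ∈ Ioi (0 : ℝ), u' c ≤ K c) (hK : AntitoneOn K (Ioi 0)) {q : ℝ} (hq : 0 < q) :
    |u q - u 1| ≤ K (min q 1) * |q - 1| := by
  have hmin_le : ∀ c ∈ uIcc 1 q, min q 1 ≤ c := fun c hc => by simpa [min_comm] using hc.1
  have hpos : ∀ c ∈ uIcc 1 q, c ∈ Ioi (0 : ℝ) := fun c hc =>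
    (lt_min hq one_pos).trans_le (hmin_le c hc)
  simpa [Real.norm_eq_abs] using
    (convex_uIcc (1 : ℝ) q).norm_image_sub_le_of_norm_hasDerivWithin_le
      (fun c hc => (hu c (hpos c hc)).hasDerivWithinAt)
      (fun c hc => by
        rw [Real.norm_of_nonneg (hu'_nonneg c (hpos c hc))]
        exact (hu'_le c (hpos c hc)).trans (hK (lt_min hq one_pos) (hpos c hc) (hmin_le c hc)))
      left_mem_uIcc right_mem_uIcc

theorem integrable_apply_of_hasDerivAt_le {X : Type*} [MeasurableSpace X] {ν : Measure X}
    [IsFiniteMeasure ν] {U U' : X → ℝ → ℝ} {K : ℝ → ℝ} {G D : ℝ}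
    (hU_meas : Measurable (Function.uncurry U))
    (hU_deriv : ∀ x, ∀ c ∈ Ioi (0 : ℝ), HasDerivAt (U x) (U' x c) c)
    (hU'_nonneg : ∀ x, ∀ c ∈ Ioi (0 : ℝ), 0 ≤ U' x c)
    (hU'_le : ∀ x, ∀ c ∈ Ioi (0 : ℝ), U' x c ≤ K c) (hK : AntitoneOn K (Ioi 0))
    (hG : ∀ x, G ≤ U x 1) (hD : ∀ x, U x 1 ≤ D) {q : ℝ} (hq : 0 < q) :
    Integrable (fun x => U x q) ν := by
  refine Integrable.of_bound hU_meas.of_uncurry_right.aestronglyMeasurable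
    (max |G| |D| + K (min q 1) * |q - 1|) (ae_of_all _ fun x => ?_)
  have h_one : |U x 1| ≤ max |G| |D| := abs_le_max_abs_abs (hG x) (hD x)
  have h_diff := abs_sub_le_of_hasDerivAt_le (hU_deriv x) (hU'_nonneg x) (hU'_le x) hK hq
  rw [Real.norm_eq_abs]
  linarith [abs_sub_abs_le_abs_sub (U x q) (U x 1)]

theorem conjugate_representation_general
    {X : Type*} [MeasurableSpace X] (ν : Measure X) [IsProbabilityMeasure ν]
    (U U' : X → ℝ → ℝ) (K₁ K₂ : ℝ → ℝ) (G D : ℝ)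
    (hU_meas : Measurable (Function.uncurry U))
    (hU_deriv : ∀ x, ∀ c ∈ Set.Ioi (0 : ℝ), HasDerivAt (U x) (U' x c) c)
    -- the bounds `K₁ ≤ ∂_c U ≤ K₂` and `G ≤ U(x,1) ≤ D`
    (hK₂_anti : StrictAntiOn K₂ (Set.Ioi 0))
    (hK₁_pos : ∀ c ∈ Set.Ioi (0 : ℝ), 0 < K₁ c)
    (hU'_ge : ∀ x, ∀ c ∈ Set.Ioi (0 : ℝ), K₁ c ≤ U' x c)
    (hU'_le : ∀ x, ∀ c ∈ Set.Ioi (0 : ℝ), U' x c ≤ K₂ c)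
    (hG : ∀ x, G ≤ U x 1) (hD : ∀ x, U x 1 ≤ D)
    -- the pointwise convex conjugate `V(x,y) = sup_{c>0} (U(x,c) − c·y)`
    (V : X → ℝ → ℝ)
    (hV : ∀ x : X, ∀ y : ℝ, 0 < y →
      IsLUB {r : ℝ | ∃ c : ℝ, 0 < c ∧ r = U x c - c * y} (V x y))
    -- the dual variable `Y`
    (Y : X → ℝ) (hY_meas : Measurable Y) (hY_pos : ∀ x, 0 < Y x)
    (hY_int : Integrable Y ν)
    (hVY_meas : Measurable fun x => V x (Y x))
    (hVY_neg : ∫⁻ x, ENNReal.ofReal (-(V x (Y x))) ∂ν ≠ ⊤) :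
    sSup {z : EReal | ∃ c : X → ℝ, Measurable c ∧ (∀ x, 0 < c x) ∧
        (∫⁻ x, ENNReal.ofReal (-(U x (c x))) ∂ν ≠ ⊤) ∧
        Integrable (fun x => c x * Y x) ν ∧
        z = utilityFunctional ν U c - ((∫ x, c x * Y x ∂ν : ℝ) : EReal)}
      = utilityFunctional ν V Y := by
  simp only [utilityFunctional_eq_erealIntegral]
  set f : X → ℝ → ℝ := fun x c => U x c - c * Y x
  have hf_meas : Measurable (Function.uncurry f) :=
    hU_meas.sub (measurable_snd.mul (hY_meas.comp measurable_fst))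
  apply le_antisymm
  · refine sSup_le ?_
    rintro _ ⟨c, hc_meas, hc_pos, hUc_neg, hcY_int, rfl⟩
    exact erealIntegral_sub_integral_le
      (hU_meas.comp (measurable_id.prodMk hc_meas)).aestronglyMeasurable hUc_neg hcY_int
      hVY_meas.aestronglyMeasurable hVY_neg fun x => (hV x (Y x) (hY_pos x)).1 ⟨c x, hc_pos x, rfl⟩
  set q : ℕ → ℝ := fun n => TopologicalSpace.denseSeq (Ioi (0 : ℝ)) n
  have hq_pos : ∀ n, 0 < q n := fun n => (TopologicalSpace.denseSeq (Ioi (0 : ℝ)) n).2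
  have hUq_int : ∀ k, Integrable (fun x => U x (q k)) ν := fun k =>
    integrable_apply_of_hasDerivAt_le hU_meas hU_deriv
      (fun x c hc => (hK₁_pos c hc).le.trans (hU'_ge x c hc)) hU'_le hK₂_anti.antitoneOn hG hD
      (hq_pos k)
  have hqY_int : ∀ k, Integrable (fun x => q k * Y x) ν := fun k => hY_int.const_mul (q k)
  have hf_lub : ∀ x, IsLUB (range fun k => f x (q k)) (V x (Y x)) := fun x =>
    isLUB_range_denseSeq_Ioi (h := f x) (fun c hc => ((hU_deriv x c hc).continuousAt.sub
      (continuousAt_id.mul continuousAt_const)).continuousWithinAt) (hV x (Y x) (hY_pos x))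
  refine le_of_tendsto' (tendsto_erealIntegral_greedyArgmax hf_meas
    (fun k => (hUq_int k).sub (hqY_int k)) hf_lub) fun n => le_sSup ?_
  have hUc_int := integrable_comp_greedyArgmax hf_meas hUq_int n
  have hcY_int := integrable_comp_greedyArgmax (φ := fun x c => c * Y x) hf_meas hqY_int n
  exact ⟨greedyArgmax f q n, measurable_greedyArgmax hf_meas n,
    fun x => (greedyArgmax_mem_range n x).elim fun k hk => hk ▸ hq_pos k,
    lintegral_ofReal_neg_ne_top_of_integrable hUc_int, hcY_int,
    erealIntegral_sub_of_integrable hUc_int hcY_int⟩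

/-- Representation formula of Proposition 4.1, in abstract form: for a measurable `Y > 0`
with `∫ Y dν < ∞`, and `V(x,y) = sup_{c>0} (U(x,c) − c·y)` the pointwise convex conjugate
(with `x ↦ V(x,Y(x))` measurable and `∫ V(x,Y(x)) dν > −∞`),
`sup_c ( ∫ U(x,c(x)) dν − ∫ c(x)Y(x) dν ) = ∫ V(x,Y(x)) dν`, as an equality in `(−∞,+∞]`,
the supremum being over measurable `c : X → (0,∞)` with `∫ (U(x,c(x)))⁻ dν < ∞` and
`∫ c·Y dν < ∞`. -/
theorem conjugate_representation
    {X : Type*} [MeasurableSpace X] (ν : Measure X) [IsProbabilityMeasure ν]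
    (U U' : X → ℝ → ℝ) (K₁ K₂ : ℝ → ℝ) (G D : ℝ) (hGD : G ≤ D)
    (hU_meas : Measurable (Function.uncurry U))
    (hU_concave : ∀ x, StrictConcaveOn ℝ (Set.Ioi 0) (U x))
    (hU_mono : ∀ x, StrictMonoOn (U x) (Set.Ioi 0))
    (hU_deriv : ∀ x, ∀ c ∈ Set.Ioi (0 : ℝ), HasDerivAt (U x) (U' x c) c)
    (hU'_cont : ∀ x, ContinuousOn (U' x) (Set.Ioi 0))
    -- the Inada conditions
    (h_inada_zero : ∀ x, Filter.Tendsto (U' x) (nhdsWithin 0 (Set.Ioi 0)) Filter.atTop)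
    (h_inada_infty : ∀ x, Filter.Tendsto (U' x) Filter.atTop (nhds 0))
    -- the bounds `K₁ ≤ ∂_c U ≤ K₂` and `G ≤ U(x,1) ≤ D`
    (hK₁_cont : ContinuousOn K₁ (Set.Ioi 0)) (hK₂_cont : ContinuousOn K₂ (Set.Ioi 0))
    (hK₁_anti : StrictAntiOn K₁ (Set.Ioi 0)) (hK₂_anti : StrictAntiOn K₂ (Set.Ioi 0))
    (hK₁_pos : ∀ c ∈ Set.Ioi (0 : ℝ), 0 < K₁ c) (hK₂_pos : ∀ c ∈ Set.Ioi (0 : ℝ), 0 < K₂ c)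
    (hU'_ge : ∀ x, ∀ c ∈ Set.Ioi (0 : ℝ), K₁ c ≤ U' x c)
    (hU'_le : ∀ x, ∀ c ∈ Set.Ioi (0 : ℝ), U' x c ≤ K₂ c)
    (hG : ∀ x, G ≤ U x 1) (hD : ∀ x, U x 1 ≤ D)
    -- the pointwise convex conjugate `V(x,y) = sup_{c>0} (U(x,c) − c·y)`
    (V : X → ℝ → ℝ)
    (hV : ∀ x : X, ∀ y : ℝ, 0 < y →
      IsLUB {r : ℝ | ∃ c : ℝ, 0 < c ∧ r = U x c - c * y} (V x y))
    -- the dual variable `Y`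
    (Y : X → ℝ) (hY_meas : Measurable Y) (hY_pos : ∀ x, 0 < Y x)
    (hY_int : Integrable Y ν)
    (hVY_meas : Measurable fun x => V x (Y x))
    (hVY_neg : ∫⁻ x, ENNReal.ofReal (-(V x (Y x))) ∂ν ≠ ⊤) :
    sSup {z : EReal | ∃ c : X → ℝ, Measurable c ∧ (∀ x, 0 < c x) ∧
        (∫⁻ x, ENNReal.ofReal (-(U x (c x))) ∂ν ≠ ⊤) ∧
        Integrable (fun x => c x * Y x) ν ∧
        z = utilityFunctional ν U c - ((∫ x, c x * Y x ∂ν : ℝ) : EReal)}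
      = utilityFunctional ν V Y :=
  conjugate_representation_general ν U U' K₁ K₂ G D hU_meas hU_deriv hK₂_anti hK₁_pos hU'_ge hU'_le
    hG hD V hV Y hY_meas hY_pos hY_int hVY_meas hVY_neg
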